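/- (Expansion of the fixed-effect meta-analysis estimator; equation (10) of the Supplement.) Suppose θ̂_{n,1},…,θ̂_{n,K} are random vectors in ℝ^p, Σ̂_{n,1},…,Σ̂_{n,K} are random p×p matrices converging in probability to a common invertible matrix Σ, n_k/n → c_k > 0 for each k, and √n(θ̂_{n,k} − β*) is bounded in probability for each k. Then the fixed-effect meta-analysis estimator β̂_meta = (Σ_{k=1}^K (Σ̂_{n,k}/n_k)^{-1})^{-1} Σ_{k=1}^K (Σ̂_{n,k}/n_k)^{-1} θ̂_{n,k} satisfies √n(β̂_meta − β*) − (Σ_{k=1}^K c_k)^{-1} Σ_{k=1}^K c_k √n(θ̂_{n,k} − β*) → 0 in probability. -/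

import Mathlib

/-!
With `S_k = Σ̂_{n,k} / n_k`, the estimator error is `β̂_meta - β* = ∑ k, W_k (θ̂_k - β*)` for the
weights `W_k = (∑ j, S_j⁻¹)⁻¹ S_k⁻¹`, as soon as `∑ j, S_j⁻¹` is invertible. The weights do not
change when all `S_k` are multiplied by `n`, and `n S_{n,k} = (n / n_k) Σ̂_{n,k} → c_k⁻¹ Σ` in
probability, so by continuity `W_k → (c_k / ∑ j, c_j) • 1` in probability. The difference in
question is therefore `∑ k, (W_k - (c_k / ∑ j, c_j) • 1) √n (θ̂_k - β*)`, a sum of `o_P(1)` matrices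
applied to `O_P(1)` vectors, hence `o_P(1)`; the singular case has vanishing probability.
-/

open MeasureTheory Filter Topology Matrix

namespace MeasureTheory

variable {Ω ι E F G : Type*} [MeasurableSpace Ω] {μ : Measure Ω} {l : Filter ι}

/-- Convergence in measure to a constant, phrased with neighbourhoods so that it applies to
matrices, which carry no canonical metric. -/
def TendstoInMeasureNhds [TopologicalSpace E] (μ : Measure Ω) (f : ι → Ω → E) (l : Filter ι)
    (a : E) : Prop :=
  ∀ U ∈ 𝓝 a, Tendsto (fun i => μ {ω | f i ω ∉ U}) l (𝓝 0)

def BoundedInProbability [Norm F] (μ : Measure Ω) (l : Filter ι) (g : ι → Ω → F) : Prop :=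
  ∀ ε : ℝ, 0 < ε → ∃ M : ℝ, ∀ᶠ i in l, μ {ω | M < ‖g i ω‖} ≤ ENNReal.ofReal ε

theorem tendsto_measure_zero_of_subset_union {s t u : ι → Set Ω}
    (hs : ∀ i, s i ⊆ t i ∪ u i) (ht : Tendsto (fun i => μ (t i)) l (𝓝 0))
    (hu : Tendsto (fun i => μ (u i)) l (𝓝 0)) : Tendsto (fun i => μ (s i)) l (𝓝 0) :=
  tendsto_of_tendsto_of_tendsto_of_le_of_le tendsto_const_nhds (by simpa using ht.add hu)
    (fun _ => zero_le) fun i => (measure_mono (hs i)).trans (measure_union_le _ _)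

theorem tendstoInMeasure_const_iff [PseudoEMetricSpace E] {f : ι → Ω → E} {a : E} :
    TendstoInMeasure μ f l (fun _ => a) ↔ TendstoInMeasureNhds μ f l a := by
  refine ⟨fun hf U hU => ?_, fun h ε hε => ?_⟩
  · obtain ⟨ε, hε, hεU⟩ := EMetric.mem_nhds_iff.1 hU
    refine tendsto_of_tendsto_of_tendsto_of_le_of_le tendsto_const_nhds (hf ε hε)
      (fun _ => zero_le) fun i => measure_mono fun ω hω => ?_
    simpa [Metric.mem_eball] using mt (@hεU (f i ω)) hω
  · simpa [Metric.mem_eball] using h _ (Metric.eball_mem_nhds a hε)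

namespace TendstoInMeasureNhds

variable [TopologicalSpace E]

theorem comp_continuousAt [TopologicalSpace F] {f : ι → Ω → E} {a : E} {g : E → F}
    (hf : TendstoInMeasureNhds μ f l a) (hg : ContinuousAt g a) :
    TendstoInMeasureNhds μ (fun i ω => g (f i ω)) l (g a) :=
  fun _ hV => hf _ (hg hV)

theorem of_tendsto {r : ι → E} {a : E} (hr : Tendsto r l (𝓝 a)) :
    TendstoInMeasureNhds μ (fun i _ => r i) l a := fun _ hU =>
  tendsto_const_nhds.congr' <| (hr.eventually_mem hU).mono fun i hi => by simp [hi]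

theorem prodMk [TopologicalSpace F] {f : ι → Ω → E} {g : ι → Ω → F} {a : E} {b : F}
    (hf : TendstoInMeasureNhds μ f l a) (hg : TendstoInMeasureNhds μ g l b) :
    TendstoInMeasureNhds μ (fun i ω => (f i ω, g i ω)) l (a, b) := fun W hW => by
  obtain ⟨U, hU, V, hV, hUV⟩ := mem_nhds_prod_iff.1 hW
  refine tendsto_measure_zero_of_subset_union (fun i ω hω => ?_) (hf U hU) (hg V hV)
  by_contra h
  simp only [Set.mem_union, Set.mem_ofPred_eq, not_or, not_not] at h
  exact hω (hUV ⟨h.1, h.2⟩)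

theorem pi {κ : Type*} [Fintype κ] {E : κ → Type*} [∀ k, TopologicalSpace (E k)]
    {f : ι → Ω → ∀ k, E k} {a : ∀ k, E k}
    (hf : ∀ k, TendstoInMeasureNhds μ (fun i ω => f i ω k) l (a k)) :
    TendstoInMeasureNhds μ f l a := fun U hU => by
  obtain ⟨I, -, t, ht, hIU⟩ := Filter.mem_pi.1 (by rwa [nhds_pi] at hU)
  refine tendsto_of_tendsto_of_tendsto_of_le_of_le tendsto_const_nhds
    (by simpa using tendsto_finsetSum Finset.univ fun k _ => hf k _ (ht k))
    (fun _ => zero_le) fun i =>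
      (measure_mono fun ω hω => ?_).trans (measure_iUnion_fintype_le _ _)
  by_contra h
  simp only [Set.mem_iUnion, Set.mem_ofPred_eq, not_exists, not_not] at h
  exact hω (hIU fun k _ => h k)

theorem finsetSum {κ : Type*} [Fintype κ] [AddCommMonoid E] [ContinuousAdd E]
    {f : κ → ι → Ω → E} {a : κ → E} (hf : ∀ k, TendstoInMeasureNhds μ (f k) l (a k)) :
    TendstoInMeasureNhds μ (fun i ω => ∑ k, f k i ω) l (∑ k, a k) :=
  (pi (f := fun i ω k => f k i ω) hf).comp_continuousAt
    (continuous_finsetSum Finset.univ fun k _ => continuous_apply k).continuousAt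

theorem congr_of_tendsto_measure_ne {f g : ι → Ω → E} {a : E}
    (hg : TendstoInMeasureNhds μ g l a)
    (hfg : Tendsto (fun i => μ {ω | f i ω ≠ g i ω}) l (𝓝 0)) :
    TendstoInMeasureNhds μ f l a := fun U hU =>
  tendsto_measure_zero_of_subset_union (fun i ω hω => by
    by_cases hfω : f i ω = g i ω
    · exact Or.inr (by simpa [hfω] using hω)
    · exact Or.inl hfω) hfg (hg U hU)

theorem apply_of_boundedInProbability [NormedAddCommGroup F] [ProperSpace F] [TopologicalSpace G]
    {f : ι → Ω → E} {a : E} {g : ι → Ω → F} {Φ : E → F → G} {b : G}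
    (hf : TendstoInMeasureNhds μ f l a) (hg : BoundedInProbability μ l g)
    (hΦ : ∀ y, ContinuousAt (Function.uncurry Φ) (a, y)) (hΦa : ∀ y, Φ a y = b) :
    TendstoInMeasureNhds μ (fun i ω => Φ (f i ω) (g i ω)) l b := fun V hV => by
  refine ENNReal.tendsto_nhds_zero.2 fun ε hε => ?_
  obtain ⟨r, -, hr0, hrε⟩ := ENNReal.lt_iff_exists_real_btwn.1 hε
  have hr : 0 < r / 2 := half_pos (ENNReal.ofReal_pos.1 hr0)
  obtain ⟨M, hM⟩ := hg (r / 2) hr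
  have hU : ∀ᶠ x in 𝓝 a, ∀ y ∈ Metric.closedBall (0 : F) M, Φ x y ∈ V :=
    (isCompact_closedBall 0 M).eventually_forall_of_forall_eventually fun y _ =>
      hΦ y (by simpa [hΦa] using hV)
  filter_upwards [hM, ENNReal.tendsto_nhds_zero.1 (hf _ hU) _ (ENNReal.ofReal_pos.2 hr)]
    with i hMi hfi
  calc μ {ω | Φ (f i ω) (g i ω) ∉ V}
      ≤ μ ({ω | f i ω ∉ {x | ∀ y ∈ Metric.closedBall (0 : F) M, Φ x y ∈ V}}
          ∪ {ω | M < ‖g i ω‖}) := measure_mono fun ω hω => by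
        by_contra h
        simp only [Set.mem_union, Set.mem_ofPred_eq, not_or, not_not, not_lt] at h
        exact hω (h.1 _ (mem_closedBall_zero_iff.2 h.2))
    _ ≤ ENNReal.ofReal (r / 2) + ENNReal.ofReal (r / 2) :=
        (measure_union_le _ _).trans (add_le_add hfi hMi)
    _ ≤ ε := by rw [← ENNReal.ofReal_add hr.le hr.le, add_halves]; exact hrε.le

end TendstoInMeasureNhds

end MeasureTheory

theorem IsUnit.smul_of_ne_zero {K A : Type*} [Field K] [Ring A] [Algebra K A] {t : K}
    (ht : t ≠ 0) {a : A} (ha : IsUnit a) : IsUnit (t • a) :=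
  Algebra.smul_def t a ▸ (ht.isUnit.map (algebraMap K A)).mul ha

namespace Matrix

variable {n 𝕜 : Type*} [Fintype n] [DecidableEq n]

theorem inv_smul₀ [Field 𝕜] (t : 𝕜) (A : Matrix n n 𝕜) : (t • A)⁻¹ = t⁻¹ • A⁻¹ := by
  rcases eq_or_ne t 0 with rfl | ht
  · simp
  by_cases hA : IsUnit A.det
  · exact inv_smul' A (Units.mk0 t ht) hA
  · have htA : ¬IsUnit (t • A).det := by
      rwa [det_smul, IsUnit.mul_iff, and_iff_right ((Ne.isUnit ht).pow _)]
    rw [nonsing_inv_apply_not_isUnit _ hA, nonsing_inv_apply_not_isUnit _ htA, smul_zero]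

theorem continuousAt_inv [NormedField 𝕜] {A : Matrix n n 𝕜} (hA : IsUnit A) :
    ContinuousAt Inv.inv A :=
  continuousAt_matrix_inv A <| by
    rw [Ring.inverse_eq_inv']
    exact continuousAt_inv₀ ((isUnit_iff_isUnit_det A).1 hA).ne_zero

theorem isOpen_setOf_isUnit [NormedField 𝕜] : IsOpen {A : Matrix n n 𝕜 | IsUnit A} := by
  simp only [isUnit_iff_isUnit_det, isUnit_iff_ne_zero]
  exact isOpen_ne_fun continuous_id.matrix_det continuous_const

end Matrix

section FixedEffect

variable {ι n 𝕜 : Type*} [Fintype ι] [Fintype n] [DecidableEq n]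

noncomputable def fixedEffectEstimate [Field 𝕜] (S : ι → Matrix n n 𝕜) (θ : ι → n → 𝕜) : n → 𝕜 :=
  (∑ j, (S j)⁻¹)⁻¹ *ᵥ ∑ k, (S k)⁻¹ *ᵥ θ k

noncomputable def fixedEffectWeight [Field 𝕜] (S : ι → Matrix n n 𝕜) (k : ι) : Matrix n n 𝕜 :=
  (∑ j, (S j)⁻¹)⁻¹ * (S k)⁻¹

section Field

variable [Field 𝕜]

theorem fixedEffectWeight_smul {t : 𝕜} (ht : t ≠ 0) (S : ι → Matrix n n 𝕜) (k : ι) :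
    fixedEffectWeight (fun j => t • S j) k = fixedEffectWeight S k := by
  simp only [fixedEffectWeight, Matrix.inv_smul₀, ← Finset.smul_sum, Matrix.smul_mul,
    Matrix.mul_smul, smul_smul, inv_inv, inv_mul_cancel₀ ht, one_smul]

theorem fixedEffectWeight_inv_smul_const (c : ι → 𝕜) {Sig : Matrix n n 𝕜} (hSig : IsUnit Sig)
    (k : ι) : fixedEffectWeight (fun j => (c j)⁻¹ • Sig) k = ((∑ j, c j)⁻¹ * c k) • 1 := by
  have hdet := (Matrix.isUnit_iff_isUnit_det Sig).1 hSig
  simp only [fixedEffectWeight, Matrix.inv_smul₀, inv_inv, ← Finset.sum_smul,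
    Matrix.smul_mul, Matrix.mul_smul, smul_smul, Matrix.nonsing_inv_nonsing_inv _ hdet,
    Matrix.mul_nonsing_inv _ hdet, mul_comm]

theorem fixedEffectEstimate_sub {S : ι → Matrix n n 𝕜} (hS : IsUnit (∑ j, (S j)⁻¹))
    (θ : ι → n → 𝕜) (β : n → 𝕜) :
    fixedEffectEstimate S θ - β = ∑ k, fixedEffectWeight S k *ᵥ (θ k - β) := by
  have hdet := (Matrix.isUnit_iff_isUnit_det _).1 hS
  simp only [fixedEffectEstimate, fixedEffectWeight, Matrix.mulVec_sub, Finset.sum_sub_distrib,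
    ← Matrix.mulVec_mulVec, ← Matrix.mulVec_sum, ← Matrix.sum_mulVec]
  rw [Matrix.mulVec_mulVec, Matrix.nonsing_inv_mul _ hdet, Matrix.one_mulVec]

theorem smul_fixedEffectEstimate_sub_sub_smul_sum {S : ι → Matrix n n 𝕜}
    (hS : IsUnit (∑ j, (S j)⁻¹)) (θ : ι → n → 𝕜) (β : n → 𝕜) (s : 𝕜) (c : ι → 𝕜) :
    s • (fixedEffectEstimate S θ - β) - (∑ j, c j)⁻¹ • ∑ k, c k • s • (θ k - β) =
      ∑ k, (fixedEffectWeight S k - ((∑ j, c j)⁻¹ * c k) • 1) *ᵥ (s • (θ k - β)) := by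
  rw [fixedEffectEstimate_sub hS, Finset.smul_sum, Finset.smul_sum, ← Finset.sum_sub_distrib]
  refine Finset.sum_congr rfl fun k _ => ?_
  rw [Matrix.sub_mulVec, Matrix.smul_mulVec, Matrix.one_mulVec, Matrix.mulVec_smul, smul_smul]

end Field

theorem continuousAt_sum_inv [NormedField 𝕜] {S : ι → Matrix n n 𝕜} (hS : ∀ j, IsUnit (S j)) :
    ContinuousAt (fun T : ι → Matrix n n 𝕜 => ∑ j, (T j)⁻¹) S :=
  tendsto_finsetSum _ fun j _ => (Matrix.continuousAt_inv (hS j)).comp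
    (f := fun T : ι → Matrix n n 𝕜 => T j) (continuousAt_apply j S)

theorem continuousAt_fixedEffectWeight [NormedField 𝕜] {S : ι → Matrix n n 𝕜}
    (hS : ∀ j, IsUnit (S j)) (hsum : IsUnit (∑ j, (S j)⁻¹)) (k : ι) :
    ContinuousAt (fun T => fixedEffectWeight T k) S :=
  ((Matrix.continuousAt_inv hsum).comp (f := fun T : ι → Matrix n n 𝕜 => ∑ j, (T j)⁻¹)
    (continuousAt_sum_inv hS)).mul
      ((Matrix.continuousAt_inv (hS k)).comp (f := fun T : ι → Matrix n n 𝕜 => T k)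
        (continuousAt_apply k S))

end FixedEffect

theorem fixedEffect_expansion_of_rescaled {ι n : Type*} [Fintype ι] [Fintype n] [DecidableEq n]
    {N : ℝ} (hN : N ≠ 0) (m : ι → ℝ) (Sh : ι → Matrix n n ℝ)
    (hY : IsUnit (∑ k, ((N / m k) • Sh k)⁻¹)) (θ : ι → EuclideanSpace ℝ n)
    (β b : EuclideanSpace ℝ n)
    (hb : ∀ j, b j = fixedEffectEstimate (fun k => (m k)⁻¹ • Sh k) (fun k i => θ k i) j)
    (s : ℝ) (c : ι → ℝ) :
    s • (b - β) - (∑ k, c k)⁻¹ • ∑ k, c k • s • (θ k - β) =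
      ∑ k, WithLp.toLp 2 ((fixedEffectWeight (fun j => (N / m j) • Sh j) k
        - ((∑ j, c j)⁻¹ * c k) • 1) *ᵥ WithLp.ofLp (s • (θ k - β))) := by
  have hS : (fun k => (m k)⁻¹ • Sh k) = fun k => N⁻¹ • (N / m k) • Sh k := by
    funext k
    rw [smul_smul, div_eq_mul_inv, inv_mul_cancel_left₀ hN]
  have hsum : ∑ k, ((m k)⁻¹ • Sh k)⁻¹ = N • ∑ k, ((N / m k) • Sh k)⁻¹ := by
    rw [Finset.smul_sum]
    refine Finset.sum_congr rfl fun k _ => ?_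
    rw [Matrix.inv_smul₀, Matrix.inv_smul₀, smul_smul, inv_inv, inv_div, mul_div_cancel₀ _ hN]
  apply WithLp.ofLp_injective
  simp only [WithLp.ofLp_sub, WithLp.ofLp_smul, WithLp.ofLp_sum]
  rw [show WithLp.ofLp b = _ from funext hb,
    smul_fixedEffectEstimate_sub_sub_smul_sum (hsum ▸ hY.smul_of_ne_zero hN)]
  simp only [hS, fixedEffectWeight_smul (inv_ne_zero hN)]

theorem meta_analysis_expansion_general
    {Ω : Type} [MeasurableSpace Ω] (P : Measure Ω)
    (p K : ℕ) (hK : 1 ≤ K)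
    (βstar : EuclideanSpace ℝ (Fin p))
    -- the study estimators
    (θhat : ℕ → Ω → Fin K → EuclideanSpace ℝ (Fin p))
    -- estimated covariance matrices converging in probability to a common invertible Σ
    (Shat : ℕ → Ω → Fin K → Matrix (Fin p) (Fin p) ℝ)
    (Sig : Matrix (Fin p) (Fin p) ℝ) (hSig : IsUnit Sig)
    (hShatconv : ∀ k i j,
      TendstoInMeasure P (fun n ω => Shat n ω k i j) atTop (fun _ => Sig i j))
    -- study sample sizes with n_k/n → c_k > 0
    (nk : Fin K → ℕ → ℕ) (c : Fin K → ℝ) (hc : ∀ k, 0 < c k)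
    (hnk : ∀ k, Tendsto (fun n => (nk k n : ℝ) / n) atTop (𝓝 (c k)))
    -- √n (θ̂_{n,k} − β*) is bounded in probability (tight)
    (htight : ∀ k, ∀ ε : ℝ, 0 < ε → ∃ M : ℝ, ∀ᶠ n : ℕ in atTop,
      P {ω | M < ‖(Real.sqrt n) • (θhat n ω k - βstar)‖} ≤ ENNReal.ofReal ε)
    -- the fixed-effect meta-analysis estimator
    (βmeta : ℕ → Ω → EuclideanSpace ℝ (Fin p))
    (hβmeta : ∀ n ω (j : Fin p), βmeta n ω j =
      ((∑ k, ((nk k n : ℝ)⁻¹ • Shat n ω k)⁻¹)⁻¹).mulVec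
        (∑ k, (((nk k n : ℝ)⁻¹ • Shat n ω k)⁻¹).mulVec (fun i => θhat n ω k i)) j) :
    TendstoInMeasure P
      (fun (n : ℕ) ω => (Real.sqrt n) • (βmeta n ω - βstar)
        - (∑ k, c k)⁻¹ • ∑ k, c k • ((Real.sqrt n) • (θhat n ω k - βstar)))
      atTop (fun _ => (0 : EuclideanSpace ℝ (Fin p))) := by
  have hsum : ∑ k, c k ≠ 0 := (Finset.sum_pos (fun k _ => hc k) ⟨⟨0, hK⟩, Finset.mem_univ _⟩).ne'
  -- `Y n ω k = n • S_{n,k}`: the covariance of study `k` rescaled to the reference sample size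
  let Y : ℕ → Ω → Fin K → Matrix (Fin p) (Fin p) ℝ :=
    fun n ω k => ((n : ℝ) / nk k n) • Shat n ω k
  let Y₀ : Fin K → Matrix (Fin p) (Fin p) ℝ := fun k => (c k)⁻¹ • Sig
  have hY₀ : ∀ k, IsUnit (Y₀ k) := fun k => hSig.smul_of_ne_zero (inv_ne_zero (hc k).ne')
  have hY₀sum : IsUnit (∑ k, (Y₀ k)⁻¹) := by
    simp only [Y₀, Matrix.inv_smul₀, inv_inv, ← Finset.sum_smul]
    exact (Matrix.isUnit_nonsing_inv_iff.2 hSig).smul_of_ne_zero hsum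
  have hS : ∀ k, TendstoInMeasureNhds P (fun n ω => Shat n ω k) atTop Sig := fun k =>
    .pi fun i => .pi fun j => tendstoInMeasure_const_iff.1 (hShatconv k i j)
  have hY : TendstoInMeasureNhds P Y atTop Y₀ := .pi fun k =>
    ((TendstoInMeasureNhds.of_tendsto (((hnk k).inv₀ (hc k).ne').congr fun n => inv_div _ _)).prodMk
      (hS k)).comp_continuousAt continuous_smul.continuousAt
  have hterm : ∀ k, TendstoInMeasureNhds P (fun n ω => WithLp.toLp 2
      ((fixedEffectWeight (Y n ω) k - ((∑ j, c j)⁻¹ * c k) • 1) *ᵥ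
        WithLp.ofLp (Real.sqrt n • (θhat n ω k - βstar)))) atTop 0 := fun k =>
    hY.apply_of_boundedInProbability (Φ := fun T x => WithLp.toLp 2
        ((fixedEffectWeight T k - ((∑ j, c j)⁻¹ * c k) • 1) *ᵥ WithLp.ofLp x)) (htight k)
      (fun x => by have := continuousAt_fixedEffectWeight hY₀ hY₀sum k; fun_prop)
      (fun x => by simp [Y₀, fixedEffectWeight_inv_smul_const c hSig])
  have hsingular : Tendsto (fun n => P {ω | Y n ω ∉ {T | IsUnit (∑ k, (T k)⁻¹)}}) atTop (𝓝 0) :=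
    hY _ ((continuousAt_sum_inv hY₀).preimage_mem_nhds (Matrix.isOpen_setOf_isUnit.mem_nhds hY₀sum))
  have hlim := TendstoInMeasureNhds.finsetSum hterm
  rw [Finset.sum_const_zero] at hlim
  refine tendstoInMeasure_const_iff.2 (hlim.congr_of_tendsto_measure_ne ?_)
  -- for `n ≠ 0` the two sides can only differ on the singular event
  refine tendsto_of_tendsto_of_tendsto_of_le_of_le' tendsto_const_nhds hsingular
    (Eventually.of_forall fun _ => zero_le)
    ((eventually_ne_atTop 0).mono fun n hn => measure_mono fun ω hω hunit => hω ?_)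
  exact fixedEffect_expansion_of_rescaled (Nat.cast_ne_zero.2 hn) _ _ hunit _ _ _ (hβmeta n ω) _ _

/-- **Expansion of the fixed-effect meta-analysis estimator** (equation (10) of the
Supplement of Tang, Kundu & Chatterjee): if the estimated covariance matrices `Σ̂_{n,k}`
converge in probability to a common invertible `Σ`, `n_k/n → c_k > 0` and
`√n (θ̂_{n,k} − β*)` is bounded in probability, then
`√n (β̂_meta − β*) = (Σ_k c_k)⁻¹ Σ_k c_k √n (θ̂_{n,k} − β*) + o_P(1)`. -/
theorem meta_analysis_expansion
    {Ω : Type} [MeasurableSpace Ω] (P : Measure Ω) [IsProbabilityMeasure P]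
    (p K : ℕ) (hK : 1 ≤ K)
    (βstar : EuclideanSpace ℝ (Fin p))
    -- the study estimators
    (θhat : ℕ → Ω → Fin K → EuclideanSpace ℝ (Fin p))
    (hθmeas : ∀ n k, Measurable (fun ω => θhat n ω k))
    -- estimated covariance matrices converging in probability to a common invertible Σ
    (Shat : ℕ → Ω → Fin K → Matrix (Fin p) (Fin p) ℝ)
    (hShatmeas : ∀ n k i j, Measurable (fun ω => Shat n ω k i j))
    (Sig : Matrix (Fin p) (Fin p) ℝ) (hSig : IsUnit Sig)
    (hShatconv : ∀ k i j,
      TendstoInMeasure P (fun n ω => Shat n ω k i j) atTop (fun _ => Sig i j))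
    -- study sample sizes with n_k/n → c_k > 0
    (nk : Fin K → ℕ → ℕ) (c : Fin K → ℝ) (hc : ∀ k, 0 < c k)
    (hnk : ∀ k, Tendsto (fun n => (nk k n : ℝ) / n) atTop (𝓝 (c k)))
    -- √n (θ̂_{n,k} − β*) is bounded in probability (tight)
    (htight : ∀ k, ∀ ε : ℝ, 0 < ε → ∃ M : ℝ, ∀ᶠ n : ℕ in atTop,
      P {ω | M < ‖(Real.sqrt n) • (θhat n ω k - βstar)‖} ≤ ENNReal.ofReal ε)
    -- the fixed-effect meta-analysis estimator
    (βmeta : ℕ → Ω → EuclideanSpace ℝ (Fin p))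
    (hβmeta : ∀ n ω (j : Fin p), βmeta n ω j =
      ((∑ k, ((nk k n : ℝ)⁻¹ • Shat n ω k)⁻¹)⁻¹).mulVec
        (∑ k, (((nk k n : ℝ)⁻¹ • Shat n ω k)⁻¹).mulVec (fun i => θhat n ω k i)) j) :
    TendstoInMeasure P
      (fun (n : ℕ) ω => (Real.sqrt n) • (βmeta n ω - βstar)
        - (∑ k, c k)⁻¹ • ∑ k, c k • ((Real.sqrt n) • (θhat n ω k - βstar)))
      atTop (fun _ => (0 : EuclideanSpace ℝ (Fin p))) :=
  meta_analysis_expansion_general P p K hK βstar θhat Shat Sig hSig hShatconv nk c hc hnk htight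
    βmeta hβmeta
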